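/- arXiv:1703.06798 — 2 statements merged into one kernel-verified Lean document; each statement's English description precedes it below -/
import Mathlib

section
/- Let p ∈ D_2 be a projection which is a finite (possibly empty) sum of mutually orthogonal projections P_μ, and such that 1 − p is also such a finite sum. Then there exists a unitary w ∈ F with 𝟙_w = p. -/
open scoped BigOperators

variable {A : Type*} [CStarAlgebra A] [PartialOrder A] [StarOrderedRing A]

/-- `Sw S μ = S_{μ_1} ⋯ S_{μ_k}`. -/
def Sw {n : ℕ} (S : Fin n → A) (μ : List (Fin n)) : A := (μ.map S).prod

/-- `Pw S μ = S_μ S_μ*`. -/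
def Pw {n : ℕ} (S : Fin n → A) (μ : List (Fin n)) : A := Sw S μ * star (Sw S μ)

/-- The set 𝒱_n of finite sums ∑ S_α S_β*. -/
def Vset {n : ℕ} (S : Fin n → A) : Set A :=
  {x | ∃ J : Finset (List (Fin n) × List (Fin n)),
      x = ∑ p ∈ J, Sw S p.1 * star (Sw S p.2)}

/-- The Thompson-like group `S_n = 𝒱_n ∩ U(O_n)`; for n = 2 this is Thompson's group V. -/
def Vgrp {n : ℕ} (S : Fin n → A) : Set A := Vset S ∩ (unitary A : Set A)

/-- The diagonal D_n: closed linear span of the projections P_μ. -/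
def Ddiag {n : ℕ} (S : Fin n → A) : Set A :=
  ((Submodule.span ℂ (Set.range (Pw S))).topologicalClosure : Submodule ℂ A)

/-- Projection: self-adjoint idempotent. -/
def IsProjection (p : A) : Prop := IsSelfAdjoint p ∧ p * p = p

/-- Concatenation ν_1 ν_2 ⋯ ν_k. -/
def wcat {n : ℕ} (ν : ℕ → List (Fin n)) (k : ℕ) : List (Fin n) :=
  ((List.range k).map ν).flatten

/-- Modestly scaling endomorphism. -/
def ModestlyScaling {n : ℕ} (S : Fin n → A) (α : A →⋆ₐ[ℂ] A) : Prop :=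
  ∀ ν : ℕ → List (Fin n), (∀ k, ν k ≠ []) →
    ∀ p : A, IsProjection p → (∀ k : ℕ, p ≤ α (Pw S (wcat ν (k + 1)))) → p = 0

/-- Generator x_0 of Thompson's group F inside U(O_2). -/
def x0 (S : Fin 2 → A) : A :=
  S 0 * S 0 * star (S 0) + S 0 * S 1 * star (S 0) * star (S 1) + S 1 * star (S 1) * star (S 1)

/-- Generators x_k of Thompson's group F inside U(O_2). -/
def xgen (S : Fin 2 → A) : ℕ → A
  | 0 => x0 S
  | k + 1 => 1 - S 1 ^ (k + 1) * star (S 1 ^ (k + 1)) + S 1 ^ (k + 1) * x0 S * star (S 1 ^ (k + 1))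

/-- Thompson's group F inside U(O_2): the subgroup generated by the x_k
(as a set: the submonoid generated by the x_k and their adjoints = inverses). -/
def Fgrp (S : Fin 2 → A) : Set A :=
  (Submonoid.closure (Set.range (xgen S) ∪ star '' Set.range (xgen S)) : Set A)

/-- The extra generator for Thompson's group T. -/
def tgen (S : Fin 2 → A) : A :=
  S 1 * S 1 * star (S 0) + S 0 * star (S 0) * star (S 1) + S 1 * S 0 * star (S 1) * star (S 1)

/-- Thompson's group T inside U(O_2). -/
def Tgrp (S : Fin 2 → A) : Set A :=
  (Submonoid.closure ((Set.range (xgen S) ∪ {tgen S}) ∪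
      star '' (Set.range (xgen S) ∪ {tgen S})) : Set A)

/-- `IsOneW S w p`: p is the largest projection in D_n with p w = p, i.e. p = 𝟙_w. -/
def IsOneW {n : ℕ} (S : Fin n → A) (w p : A) : Prop :=
  p ∈ Ddiag S ∧ IsProjection p ∧ p * w = p ∧
    ∀ p' : A, p' ∈ Ddiag S → IsProjection p' → p' * w = p' → p' ≤ p

/-- min(q) = inf { |μ| : P_μ ≤ q } ∈ ℕ ∪ {∞}. -/
noncomputable def minProj {n : ℕ} (S : Fin n → A) (q : A) : ℕ∞ :=
  ⨅ μ ∈ {μ : List (Fin n) | Pw S μ ≤ q}, (μ.length : ℕ∞)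

/-- The core UHF subalgebra F_n: closed linear span of {S_μ S_ν* : |μ| = |ν|}. -/
def UHF {n : ℕ} (S : Fin n → A) : Set A :=
  ((Submodule.span ℂ {x : A | ∃ μ ν : List (Fin n), μ.length = ν.length ∧
      x = Sw S μ * star (Sw S ν)}).topologicalClosure : Submodule ℂ A)

/-- μ ≺ ν : at the first index where μ and ν differ, the letter of μ is smaller. -/
def WordLt {n : ℕ} (μ ν : List (Fin n)) : Prop :=
  ∃ σ : List (Fin n), ∃ a b : Fin n, a < b ∧ (σ ++ [a]) <+: μ ∧ (σ ++ [b]) <+: ν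

/-!
The witness is `w = 1 + ∑_{ν ∈ M} S_ν (x₀ - 1) S_ν*`, the product of the copies of `x₀` placed on
the (disjoint) cylinders `ν ∈ M`. Each copy lies in `F`: conjugation by `x₀^{±1}` and `x₁` moves
cylinders around, and every cylinder is reached from one of `[]`, `[0]`, `[1]`, `[1,0]`, whose copies
are explicit words in `x₀, x₁`. Clearly `p w = p` for `p = 1 - ∑ P_ν`.

Conversely, let `q` be a diagonal projection with `q w = q`. Then `q S_ν x₀ = q S_ν` for `ν ∈ M`;
as `x₀ S_0 = S_0 S_0` and `x₀* S_1 = S_1 S_1`, this gives `q S_ν S_c^k = q S_ν S_c`, hence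
`q P_{ν c^k} = q P_{ν c}` for all `k ≥ 1`. So the diagonal element `q P_{νc}` is supported on the
shrinking cylinders `ν c^k`, and such an element vanishes, since the diagonal is the closed span of
the `P_μ`. Thus `q P_ν = q P_{ν0} + q P_{ν1} = 0`, i.e. `q ≤ p`.
-/

theorem one_add_sum_mem_of_mul_eq_zero {R ι : Type*} [Ring R] (F : Submonoid R) (s : Finset ι)
    {z : ι → R} (hz : ∀ i ∈ s, ∀ j ∈ s, i ≠ j → z i * z j = 0) (hF : ∀ i ∈ s, 1 + z i ∈ F) :
    1 + ∑ i ∈ s, z i ∈ F := by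
  classical
  induction s using Finset.induction_on with
  | empty => simp
  | insert i s hi ih =>
    have hzi : z i * ∑ j ∈ s, z j = 0 := by
      rw [Finset.mul_sum]
      exact Finset.sum_eq_zero fun j hj => hz i (Finset.mem_insert_self i s) j
        (Finset.mem_insert_of_mem hj) (ne_of_mem_of_not_mem hj hi).symm
    have hsplit : 1 + ∑ j ∈ insert i s, z j = (1 + z i) * (1 + ∑ j ∈ s, z j) := by
      rw [Finset.sum_insert hi, mul_add, add_mul, add_mul, hzi]; noncomm_ring
    rw [hsplit]
    exact mul_mem (hF i (Finset.mem_insert_self i s)) (ih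
      (fun j hj k hk => hz j (Finset.mem_insert_of_mem hj) k (Finset.mem_insert_of_mem hk))
      (fun j hj => hF j (Finset.mem_insert_of_mem hj)))

theorem star_mul_eq_zero_of_mul_star_add_mul_star {R : Type*} [Ring R] [StarRing R] {u v : R}
    (hu : star u * u = 1) (hv : star v * v = 1) (h : u * star u + v * star v = 1) : star u * v = 0 := by
  have := congrArg (fun x => star u * x * v) h
  simp only [mul_add, add_mul, mul_one, ← mul_assoc, hu, one_mul] at this
  simpa only [mul_assoc, hv, mul_one, add_eq_left] using this

section
omit [PartialOrder A] [StarOrderedRing A]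

variable {n : ℕ} {S : Fin n → A}

theorem sw_nil (S : Fin n → A) : Sw S [] = 1 := rfl

theorem sw_cons (S : Fin n → A) (a : Fin n) (μ : List (Fin n)) :
    Sw S (a :: μ) = S a * Sw S μ := by
  simp [Sw]

theorem sw_append (S : Fin n → A) (μ ν : List (Fin n)) : Sw S (μ ++ ν) = Sw S μ * Sw S ν := by
  simp [Sw]

theorem pw_mem_ddiag (S : Fin n → A) (μ : List (Fin n)) : Pw S μ ∈ Ddiag S :=
  Submodule.le_topologicalClosure _ (Submodule.subset_span ⟨μ, rfl⟩)

theorem mem_of_mem_ddiag {T : Submodule ℂ A} (hT : IsClosed (T : Set A))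
    (hP : ∀ μ, Pw S μ ∈ T) {x : A} (hx : x ∈ Ddiag S) : x ∈ T :=
  Submodule.topologicalClosure_minimal _ (Submodule.span_le.mpr (Set.range_subset_iff.mpr hP))
    hT hx

theorem isProjection_iff {p : A} : IsProjection p ↔ IsStarProjection p :=
  ⟨fun h => ⟨h.2, h.1⟩, fun h => ⟨h.2, h.1⟩⟩

/-- `g` acting on the range of `S_ν` and trivially on its complement; for `g = x₀` this is `x₀`
rescaled to the dyadic interval of `ν`. -/
def localCopy (S : Fin n → A) (ν : List (Fin n)) (g : A) : A :=
  1 + Sw S ν * (g - 1) * star (Sw S ν)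

theorem localCopy_sub_one (S : Fin n → A) (ν : List (Fin n)) (g : A) :
    localCopy S ν g - 1 = Sw S ν * (g - 1) * star (Sw S ν) :=
  add_sub_cancel_left _ _

theorem localCopy_nil (S : Fin n → A) (g : A) : localCopy S [] g = g := by
  simp [localCopy, sw_nil]

theorem star_localCopy (S : Fin n → A) (ν : List (Fin n)) (g : A) :
    star (localCopy S ν g) = localCopy S ν (star g) := by
  simp [localCopy, mul_assoc]

theorem mul_localCopy_mul_star {h g : A} (hh : h * star h = 1) {α μ : List (Fin n)}
    (hmove : h * Sw S α = Sw S μ) : h * localCopy S α g * star h = localCopy S μ g := by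
  calc h * localCopy S α g * star h
      = h * star h + h * Sw S α * (g - 1) * (star (Sw S α) * star h) := by
        rw [localCopy]; noncomm_ring
    _ = localCopy S μ g := by rw [hh, localCopy, ← hmove, star_mul, mul_assoc]

theorem localCopy_sub_one_mul_sw_of_orthogonal {μ ν : List (Fin n)}
    (h : star (Sw S μ) * Sw S ν = 0) (g : A) : (localCopy S μ g - 1) * Sw S ν = 0 := by
  rw [localCopy_sub_one, mul_assoc, h, mul_zero]

structure IsCuntzToeplitz (S : Fin n → A) : Prop where
  star_mul_self : ∀ i, star (S i) * S i = 1
  star_mul_of_ne : ∀ {i j}, i ≠ j → star (S i) * S j = 0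

namespace IsCuntzToeplitz

variable (hS : IsCuntzToeplitz S)
include hS

theorem star_mul_mul_self (i : Fin n) (t : A) : star (S i) * (S i * t) = t := by
  rw [← mul_assoc, hS.star_mul_self, one_mul]

theorem star_mul_mul_of_ne {i j : Fin n} (hij : i ≠ j) (t : A) : star (S i) * (S j * t) = 0 := by
  rw [← mul_assoc, hS.star_mul_of_ne hij, zero_mul]

theorem star_sw_mul_sw (μ : List (Fin n)) : star (Sw S μ) * Sw S μ = 1 := by
  induction μ with
  | nil => simp [sw_nil]
  | cons a μ ih => rw [sw_cons, star_mul, mul_assoc, hS.star_mul_mul_self, ih]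

theorem star_sw_mul_sw_of_not_prefix :
    ∀ {μ ν : List (Fin n)}, ¬ μ <+: ν → ¬ ν <+: μ → star (Sw S μ) * Sw S ν = 0
  | [], _, h, _ => absurd List.nil_prefix h
  | _ :: _, [], _, h' => absurd List.nil_prefix h'
  | a :: μ, b :: ν, h, h' => by
    rw [sw_cons, sw_cons, star_mul, mul_assoc]
    by_cases hab : a = b
    · subst hab
      rw [hS.star_mul_mul_self, star_sw_mul_sw_of_not_prefix
        (fun hp => h (List.cons_prefix_cons.mpr ⟨rfl, hp⟩))
        (fun hp => h' (List.cons_prefix_cons.mpr ⟨rfl, hp⟩))]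
    · rw [hS.star_mul_mul_of_ne hab, mul_zero]

theorem pw_mul_sw (μ : List (Fin n)) : Pw S μ * Sw S μ = Sw S μ := by
  rw [Pw, mul_assoc, hS.star_sw_mul_sw, mul_one]

theorem isStarProjection_pw (μ : List (Fin n)) : IsStarProjection (Pw S μ) where
  isIdempotentElem := by rw [IsIdempotentElem, Pw, mul_assoc, ← mul_assoc (star _),
    hS.star_sw_mul_sw, one_mul]
  isSelfAdjoint := by simp [IsSelfAdjoint, Pw]

theorem pw_mul_pw_of_prefix {μ ν : List (Fin n)} (h : μ <+: ν) :
    Pw S μ * Pw S ν = Pw S ν := by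
  obtain ⟨τ, rfl⟩ := h
  rw [Pw, Pw, sw_append, mul_assoc, ← mul_assoc (star (Sw S μ)), ← mul_assoc (star (Sw S μ)),
    hS.star_sw_mul_sw, one_mul, mul_assoc]

theorem pw_mul_pw_of_prefix' {μ ν : List (Fin n)} (h : μ <+: ν) :
    Pw S ν * Pw S μ = Pw S ν := by
  simpa only [star_mul, (hS.isStarProjection_pw _).isSelfAdjoint.star_eq]
    using congrArg star (hS.pw_mul_pw_of_prefix h)

theorem pw_mul_pw_of_not_prefix {μ ν : List (Fin n)} (h : ¬ μ <+: ν) (h' : ¬ ν <+: μ) :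
    Pw S μ * Pw S ν = 0 := by
  rw [Pw, Pw, mul_assoc, ← mul_assoc (star (Sw S μ)), hS.star_sw_mul_sw_of_not_prefix h h',
    zero_mul, mul_zero]

theorem star_sw_mul_sw_of_pw_mul_pw_eq_zero {μ ν : List (Fin n)}
    (h : Pw S μ * Pw S ν = 0) : star (Sw S μ) * Sw S ν = 0 := by
  calc star (Sw S μ) * Sw S ν = star (Sw S μ) * (Pw S μ * Pw S ν) * Sw S ν := by
        simp only [Pw, ← mul_assoc, hS.star_sw_mul_sw, one_mul]
        simp only [mul_assoc, hS.star_sw_mul_sw, mul_one]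
    _ = 0 := by rw [h, mul_zero, zero_mul]

theorem pw_commute (μ ν : List (Fin n)) : Commute (Pw S μ) (Pw S ν) := by
  by_cases h : μ <+: ν
  · rw [Commute, SemiconjBy, hS.pw_mul_pw_of_prefix h, hS.pw_mul_pw_of_prefix' h]
  by_cases h' : ν <+: μ
  · rw [Commute, SemiconjBy, hS.pw_mul_pw_of_prefix h', hS.pw_mul_pw_of_prefix' h']
  · rw [Commute, SemiconjBy, hS.pw_mul_pw_of_not_prefix h h', hS.pw_mul_pw_of_not_prefix h' h]

theorem pw_mul_pw_mem_ddiag (μ ν : List (Fin n)) : Pw S μ * Pw S ν ∈ Ddiag S := by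
  by_cases h : μ <+: ν
  · rw [hS.pw_mul_pw_of_prefix h]; exact pw_mem_ddiag S ν
  by_cases h' : ν <+: μ
  · rw [hS.pw_mul_pw_of_prefix' h']; exact pw_mem_ddiag S μ
  · rw [hS.pw_mul_pw_of_not_prefix h h']; exact zero_mem (Submodule.topologicalClosure _)

theorem mul_pw_mem_ddiag {x : A} (hx : x ∈ Ddiag S) (μ : List (Fin n)) :
    x * Pw S μ ∈ Ddiag S := by
  let D := Submodule.span ℂ (Set.range (Pw S))
  refine mem_of_mem_ddiag (T := D.topologicalClosure.comap (LinearMap.mulRight ℂ (Pw S μ))) ?_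
    (fun ν => hS.pw_mul_pw_mem_ddiag ν μ) hx
  exact D.isClosed_topologicalClosure.preimage (continuous_mul_const _)

theorem commute_pw_of_mem_ddiag {x : A} (hx : x ∈ Ddiag S) (μ : List (Fin n)) :
    Commute x (Pw S μ) := by
  refine (Set.mem_centralizer_iff.mp ?_ _ (Set.mem_singleton _)).symm
  refine mem_of_mem_ddiag (T := (Subalgebra.centralizer ℂ {Pw S μ}).toSubmodule)
    (Set.isClosed_centralizer _) (fun ν => ?_) hx
  exact Set.mem_centralizer_iff.mpr fun _ h => (Set.mem_singleton_iff.mp h) ▸ hS.pw_commute _ _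

theorem norm_mul_pw_le (x : A) (μ : List (Fin n)) : ‖x * Pw S μ‖ ≤ ‖x‖ :=
  (norm_mul_le _ _).trans
    (mul_le_of_le_one_right (norm_nonneg _) ((hS.isStarProjection_pw μ).norm_le))

theorem norm_pw [Nontrivial A] (μ : List (Fin n)) : ‖Pw S μ‖ = 1 := by
  have hP := hS.isStarProjection_pw μ
  have hne : Pw S μ ≠ 0 := fun h => one_ne_zero (α := A) <| by
    rw [← hS.star_sw_mul_sw μ, ← hS.pw_mul_sw μ, h, zero_mul, mul_zero]
  have hsq : ‖Pw S μ‖ * ‖Pw S μ‖ = ‖Pw S μ‖ := by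
    rw [← CStarRing.norm_star_mul_self, hP.isSelfAdjoint.star_eq, hP.isIdempotentElem.eq]
  exact mul_right_cancel₀ (norm_ne_zero_iff.mpr hne) (hsq.trans (one_mul _).symm)

theorem pw_append_mul_pw_append_of_ne (σ : List (Fin n)) {c d : Fin n} (hcd : c ≠ d) :
    Pw S (σ ++ [c]) * Pw S (σ ++ [d]) = 0 :=
  hS.pw_mul_pw_of_not_prefix (fun h => hcd (by simpa using h.eq_of_length (by simp)))
    (fun h => hcd (by simpa using (h.eq_of_length (by simp)).symm))

theorem pw_mul_pw_append_of_length_le {μ σ : List (Fin n)} (hμ : μ.length ≤ σ.length)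
    (e : Fin n) : Pw S μ * Pw S (σ ++ [e]) = if μ <+: σ then Pw S (σ ++ [e]) else 0 := by
  split_ifs with h
  · exact hS.pw_mul_pw_of_prefix (h.trans (List.prefix_append σ [e]))
  · refine hS.pw_mul_pw_of_not_prefix (fun h' => h ?_) (fun h' => ?_)
    · exact List.prefix_of_prefix_length_le h' (List.prefix_append σ [e]) hμ
    · have := h'.length_le
      simp only [List.length_append, List.length_singleton] at this
      omega

theorem sum_smul_pw_mul_pw_append {s : Finset (List (Fin n))} (a : List (Fin n) → ℂ)
    {σ : List (Fin n)} (hs : ∀ μ ∈ s, μ.length ≤ σ.length) (e : Fin n) :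
    (∑ μ ∈ s, a μ • Pw S μ) * Pw S (σ ++ [e])
      = (∑ μ ∈ s with μ <+: σ, a μ) • Pw S (σ ++ [e]) := by
  rw [Finset.sum_mul, Finset.sum_smul, Finset.sum_filter]
  refine Finset.sum_congr rfl fun μ hμ => ?_
  rw [smul_mul_assoc, hS.pw_mul_pw_append_of_length_le (hs μ hμ)]
  split_ifs <;> simp

/-- An element `x` of the span of the `P_μ`, `|μ| ≤ |σ|`, acts by the same scalar `t` on the
siblings `P_{σc}` and `P_{σd}`, on which `r` acts as `1` and `0`; so `‖r‖ ≤ 2 ‖r - x‖`. -/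
theorem eq_zero_of_mul_pw_append_eq_self {r : A} (hr : r ∈ Ddiag S) {c d : Fin n} (hcd : c ≠ d)
    (h : ∀ m, ∃ σ : List (Fin n), m ≤ σ.length ∧ r * Pw S (σ ++ [c]) = r) : r = 0 := by
  rcases subsingleton_or_nontrivial A with _ | _
  · exact Subsingleton.elim _ _
  refine norm_le_zero_iff.mp (le_of_forall_pos_lt_add fun ε hε => ?_)
  have hr' : r ∈ closure (Submodule.span ℂ (Set.range (Pw S)) : Set A) := by
    rwa [← Submodule.topologicalClosure_coe]
  obtain ⟨x, hx, hrx⟩ := Metric.mem_closure_iff.mp hr' (ε / 2) (half_pos hε)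
  obtain ⟨a, rfl⟩ := Finsupp.mem_span_range_iff_exists_finsupp.mp hx
  obtain ⟨σ, hσ, hrσ⟩ := h (a.support.sup List.length)
  set x := a.sum fun μ b => b • Pw S μ
  set t := ∑ μ ∈ a.support with μ <+: σ, a μ
  have hxσ : ∀ e, x * Pw S (σ ++ [e]) = t • Pw S (σ ++ [e]) :=
    hS.sum_smul_pw_mul_pw_append a fun μ hμ => (Finset.le_sup hμ).trans hσ
  have hrd : r * Pw S (σ ++ [d]) = 0 := by
    rw [← hrσ, mul_assoc, hS.pw_append_mul_pw_append_of_ne σ hcd, mul_zero]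
  have ht : ‖t‖ ≤ dist r x := calc
    ‖t‖ = ‖(x - r) * Pw S (σ ++ [d])‖ := by
      rw [sub_mul, hxσ, hrd, sub_zero, norm_smul, hS.norm_pw, mul_one]
    _ ≤ dist r x := by rw [dist_comm, dist_eq_norm]; exact hS.norm_mul_pw_le _ _
  calc ‖r‖ = ‖(r - x) * Pw S (σ ++ [c]) + t • Pw S (σ ++ [c])‖ := by
        rw [sub_mul, hxσ, hrσ, sub_add_cancel]
    _ ≤ dist r x + ‖t‖ := by
        refine (norm_add_le _ _).trans (add_le_add ?_ ?_)
        · rw [dist_eq_norm]; exact hS.norm_mul_pw_le _ _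
        · rw [norm_smul, hS.norm_pw, mul_one]
    _ < 0 + ε := by linarith

theorem mul_pw_eq_of_mul_sw_eq {q : A} (hq : q ∈ Ddiag S) (hqp : IsStarProjection q)
    {μ ν : List (Fin n)} (h : q * Sw S μ = q * Sw S ν) : q * Pw S μ = q * Pw S ν := by
  have key : ∀ τ, q * Pw S τ = q * Sw S τ * star (q * Sw S τ) := fun τ => calc
    q * Pw S τ = q * (q * Pw S τ) := by rw [← mul_assoc, hqp.isIdempotentElem.eq]
    _ = q * (Pw S τ * q) := by rw [(hS.commute_pw_of_mem_ddiag hq τ).eq]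
    _ = q * Sw S τ * star (q * Sw S τ) := by
      rw [star_mul, hqp.isSelfAdjoint.star_eq, Pw]; noncomm_ring
  rw [key, key, h]

theorem mul_pw_append_eq_zero {q : A} (hq : q ∈ Ddiag S) (hqp : IsStarProjection q)
    {c d : Fin n} (hcd : c ≠ d) {g : A} (hg : ∀ t, g * (S c * t) = S c * (S c * t))
    {ν : List (Fin n)} (h : q * Sw S ν * g = q * Sw S ν) : q * Pw S (ν ++ [c]) = 0 := by
  have hsw : ∀ k, q * Sw S (ν ++ List.replicate (k + 1) c) = q * Sw S (ν ++ [c]) := by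
    intro k
    induction k with
    | zero => rfl
    | succ k ih =>
      rw [← ih, sw_append, sw_append, List.replicate_succ, sw_cons, List.replicate_succ, sw_cons,
        ← hg, ← mul_assoc, ← mul_assoc, h, mul_assoc]
  have hpw : ∀ k, q * Pw S (ν ++ List.replicate (k + 1) c) = q * Pw S (ν ++ [c]) := fun k =>
    hS.mul_pw_eq_of_mul_sw_eq hq hqp (hsw k)
  refine hS.eq_zero_of_mul_pw_append_eq_self (hS.mul_pw_mem_ddiag hq _) hcd fun m =>
    ⟨ν ++ List.replicate m c, by simp, ?_⟩
  rw [List.append_assoc, ← List.replicate_succ', mul_assoc, hS.pw_mul_pw_of_prefix, hpw]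
  exact (List.prefix_append_right_inj ν).mpr (by simp [List.replicate_succ])

theorem localCopy_cons_mul_self (a : Fin n) (ν : List (Fin n)) (g t : A) :
    localCopy S (a :: ν) g * (S a * t) = S a * (localCopy S ν g * t) := by
  simp only [localCopy, sw_cons, star_mul, add_mul, mul_add, one_mul, mul_assoc,
    hS.star_mul_mul_self]

theorem localCopy_cons_mul_of_ne {a b : Fin n} (hab : a ≠ b) (ν : List (Fin n)) (g t : A) :
    localCopy S (a :: ν) g * (S b * t) = S b * t := by
  simp only [localCopy, sw_cons, star_mul, add_mul, one_mul, mul_assoc,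
    hS.star_mul_mul_of_ne hab, mul_zero, add_zero]

theorem localCopy_sub_one_mul_sw (ν : List (Fin n)) (g : A) :
    (localCopy S ν g - 1) * Sw S ν = Sw S ν * (g - 1) := by
  rw [localCopy_sub_one, mul_assoc, hS.star_sw_mul_sw, mul_one]

theorem localCopy_mem_unitary (ν : List (Fin n)) {g : A} (hg : g ∈ unitary A) :
    localCopy S ν g ∈ unitary A := by
  have key : ∀ u : A, star u * u = 1 → star (localCopy S ν u) * localCopy S ν u = 1 := by
    intro u hu
    rw [star_localCopy, localCopy, localCopy]
    calc (1 + Sw S ν * (star u - 1) * star (Sw S ν)) * (1 + Sw S ν * (u - 1) * star (Sw S ν))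
        = 1 + Sw S ν * (star u * u - 1) * star (Sw S ν) + Sw S ν * (star u - 1)
          * (star (Sw S ν) * Sw S ν - 1) * (u - 1) * star (Sw S ν) := by noncomm_ring
      _ = 1 := by rw [hu, hS.star_sw_mul_sw]; simp
  refine Unitary.mem_iff.mpr ⟨key g (Unitary.star_mul_self_of_mem hg), ?_⟩
  simpa only [star_localCopy, star_star] using
    key (star g) (by simpa using Unitary.mul_star_self_of_mem hg)

theorem localCopy_sub_one_mul_localCopy_sub_one {μ ν : List (Fin n)}
    (h : Pw S μ * Pw S ν = 0) (g : A) : (localCopy S μ g - 1) * (localCopy S ν g - 1) = 0 := by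
  rw [localCopy_sub_one S ν, ← mul_assoc, ← mul_assoc,
    localCopy_sub_one_mul_sw_of_orthogonal (hS.star_sw_mul_sw_of_pw_mul_pw_eq_zero h),
    zero_mul, zero_mul]

section Orthogonal

variable {M : Finset (List (Fin n))} (hM : ∀ μ ∈ M, ∀ ν ∈ M, μ ≠ ν → Pw S μ * Pw S ν = 0)
include hM

theorem sum_pw_mul_sw {ν : List (Fin n)} (hν : ν ∈ M) : (∑ μ ∈ M, Pw S μ) * Sw S ν = Sw S ν := by
  rw [Finset.sum_mul, Finset.sum_eq_single ν (fun μ hμ hne => ?_) (absurd hν), hS.pw_mul_sw]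
  rw [Pw, mul_assoc, hS.star_sw_mul_sw_of_pw_mul_pw_eq_zero (hM μ hμ ν hν hne), mul_zero]

theorem isStarProjection_sum_pw : IsStarProjection (∑ μ ∈ M, Pw S μ) where
  isSelfAdjoint := isSelfAdjoint_sum M fun μ _ => (hS.isStarProjection_pw μ).isSelfAdjoint
  isIdempotentElem := by
    rw [IsIdempotentElem, Finset.mul_sum]
    exact Finset.sum_congr rfl fun ν hν => by rw [Pw, ← mul_assoc, hS.sum_pw_mul_sw hM hν]

theorem one_add_sum_localCopy_mul_sw (g : A) {ν : List (Fin n)} (hν : ν ∈ M) :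
    (1 + ∑ μ ∈ M, (localCopy S μ g - 1)) * Sw S ν = Sw S ν * g := by
  rw [add_mul, one_mul, Finset.sum_mul, Finset.sum_eq_single ν (fun μ hμ hne => ?_) (absurd hν),
    hS.localCopy_sub_one_mul_sw, mul_sub, mul_one, add_sub_cancel]
  exact localCopy_sub_one_mul_sw_of_orthogonal
    (hS.star_sw_mul_sw_of_pw_mul_pw_eq_zero (hM μ hμ ν hν hne)) g

theorem one_sub_sum_pw_mul_one_add_sum_localCopy (g : A) :
    (1 - ∑ μ ∈ M, Pw S μ) * (1 + ∑ μ ∈ M, (localCopy S μ g - 1)) = 1 - ∑ μ ∈ M, Pw S μ := by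
  have h : (∑ μ ∈ M, Pw S μ) * ∑ μ ∈ M, (localCopy S μ g - 1) = ∑ μ ∈ M, (localCopy S μ g - 1) := by
    rw [Finset.mul_sum]
    exact Finset.sum_congr rfl fun ν hν => by
      rw [localCopy_sub_one, ← mul_assoc, ← mul_assoc, hS.sum_pw_mul_sw hM hν]
  rw [sub_mul, one_mul, mul_add, mul_one, h]
  abel

end Orthogonal

end IsCuntzToeplitz

structure IsCuntz (S : Fin n → A) : Prop extends IsCuntzToeplitz S where
  sum_mul_star : ∑ i, S i * star (S i) = 1

theorem IsCuntz.of_two {S : Fin 2 → A} (hiso : ∀ i, star (S i) * S i = 1)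
    (hsum : S 0 * star (S 0) + S 1 * star (S 1) = 1) : IsCuntz S where
  star_mul_self := hiso
  star_mul_of_ne {i j} hij := by
    fin_cases i <;> fin_cases j
    · exact absurd rfl hij
    · exact star_mul_eq_zero_of_mul_star_add_mul_star (hiso 0) (hiso 1) hsum
    · exact star_mul_eq_zero_of_mul_star_add_mul_star (hiso 1) (hiso 0) (by rwa [add_comm])
    · exact absurd rfl hij
  sum_mul_star := by rwa [Fin.sum_univ_two]

namespace IsCuntz

variable (hS : IsCuntz S)
include hS

theorem sum_pw_append (μ : List (Fin n)) : ∑ i, Pw S (μ ++ [i]) = Pw S μ := by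
  simp only [Pw, sw_append, sw_cons, sw_nil, mul_one, star_mul, mul_assoc, ← Finset.mul_sum]
  simp only [← mul_assoc, ← Finset.sum_mul]
  rw [mul_assoc (Sw S μ), hS.sum_mul_star, one_mul]

theorem mul_sw_eq_of_forall_mul_sw_append {u v : A} {μ : List (Fin n)}
    (h : ∀ i, u * Sw S (μ ++ [i]) = v * Sw S (μ ++ [i])) : u * Sw S μ = v * Sw S μ := by
  have hμ : Sw S μ = ∑ i, Sw S (μ ++ [i]) * star (S i) := by
    simp only [sw_append, sw_cons, sw_nil, mul_one, mul_assoc, ← Finset.mul_sum, hS.sum_mul_star]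
  simp only [hμ, Finset.mul_sum, ← mul_assoc, h]

end IsCuntz

end

section
omit [PartialOrder A] [StarOrderedRing A]

variable {S : Fin 2 → A}

theorem star_mem_fgrp {a : A} (ha : a ∈ Fgrp S) : star a ∈ Fgrp S := by
  induction ha using Submonoid.closure_induction with
  | mem x hx =>
    rcases hx with ⟨k, rfl⟩ | ⟨y, ⟨k, rfl⟩, rfl⟩
    · exact Submonoid.subset_closure (Or.inr ⟨_, ⟨k, rfl⟩, rfl⟩)
    · rw [star_star]; exact Submonoid.subset_closure (Or.inl ⟨k, rfl⟩)
  | one => rw [star_one]; exact one_mem _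
  | mul a b _ _ ha hb => rw [star_mul]; exact mul_mem hb ha

theorem xgen_mem_fgrp (S : Fin 2 → A) (k : ℕ) : xgen S k ∈ Fgrp S :=
  Submonoid.subset_closure (Or.inl ⟨k, rfl⟩)

theorem x0_mem_fgrp : x0 S ∈ Fgrp S := xgen_mem_fgrp S 0

theorem xgen_eq_localCopy (S : Fin 2 → A) (k : ℕ) :
    xgen S k = localCopy S (List.replicate k 1) (x0 S) := by
  have hsw : Sw S (List.replicate k 1) = S 1 ^ k := by simp [Sw]
  cases k with
  | zero => simp [xgen, localCopy_nil]
  | succ k => rw [xgen, localCopy, hsw]; noncomm_ring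

namespace IsCuntzToeplitz

variable (hS : IsCuntzToeplitz S)
include hS

theorem x0_mul_S_zero (t : A) : x0 S * (S 0 * t) = S 0 * (S 0 * t) := by
  simp [x0, add_mul, mul_assoc, hS.star_mul_mul_self, hS.star_mul_mul_of_ne]

theorem x0_mul_S_one_S_zero (t : A) : x0 S * (S 1 * (S 0 * t)) = S 0 * (S 1 * t) := by
  simp [x0, add_mul, mul_assoc, hS.star_mul_mul_self, hS.star_mul_mul_of_ne]

theorem x0_mul_S_one_S_one (t : A) : x0 S * (S 1 * (S 1 * t)) = S 1 * t := by
  simp [x0, add_mul, mul_assoc, hS.star_mul_mul_self, hS.star_mul_mul_of_ne]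

theorem star_x0_mul_S_zero_S_zero (t : A) : star (x0 S) * (S 0 * (S 0 * t)) = S 0 * t := by
  simp [x0, add_mul, mul_assoc, hS.star_mul_mul_self, hS.star_mul_mul_of_ne]

theorem star_x0_mul_S_zero_S_one (t : A) :
    star (x0 S) * (S 0 * (S 1 * t)) = S 1 * (S 0 * t) := by
  simp [x0, add_mul, mul_assoc, hS.star_mul_mul_self, hS.star_mul_mul_of_ne]

theorem star_x0_mul_S_one (t : A) : star (x0 S) * (S 1 * t) = S 1 * (S 1 * t) := by
  simp [x0, add_mul, mul_assoc, hS.star_mul_mul_self, hS.star_mul_mul_of_ne]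

end IsCuntzToeplitz

namespace IsCuntz

variable (hS : IsCuntz S)
include hS

theorem eq_of_forall_mul_sw_singleton {u v : A} (h : ∀ i, u * Sw S [i] = v * Sw S [i]) :
    u = v := by
  simpa [sw_nil] using hS.mul_sw_eq_of_forall_mul_sw_append (μ := []) h

theorem x0_mem_unitary : x0 S ∈ unitary A := by
  refine Unitary.mem_iff.mpr ⟨?_, ?_⟩ <;>
  · refine hS.eq_of_forall_mul_sw_singleton fun i =>
      hS.mul_sw_eq_of_forall_mul_sw_append fun j => ?_
    fin_cases i <;> fin_cases j <;>
      simp [sw_cons, mul_assoc, hS.x0_mul_S_zero, hS.x0_mul_S_one_S_zero, hS.x0_mul_S_one_S_one,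
        hS.star_x0_mul_S_zero_S_zero, hS.star_x0_mul_S_zero_S_one, hS.star_x0_mul_S_one]

theorem mem_unitary_of_mem_fgrp {a : A} (ha : a ∈ Fgrp S) : a ∈ unitary A := by
  refine (Submonoid.closure_le (S := unitary A)).mpr ?_ ha
  have hx : ∀ k, xgen S k ∈ unitary A := fun k => by
    rw [xgen_eq_localCopy]; exact hS.localCopy_mem_unitary _ hS.x0_mem_unitary
  rintro _ (⟨k, rfl⟩ | ⟨_, ⟨k, rfl⟩, rfl⟩)
  · exact hx k
  · exact Unitary.star_mem (hx k)

theorem localCopy_mem_fgrp_of_mul_sw {h : A} (hh : h ∈ Fgrp S) {α μ : List (Fin 2)}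
    (hmove : h * Sw S α = Sw S μ) (hα : localCopy S α (x0 S) ∈ Fgrp S) :
    localCopy S μ (x0 S) ∈ Fgrp S := by
  rw [← mul_localCopy_mul_star (Unitary.mul_star_self_of_mem (hS.mem_unitary_of_mem_fgrp hh))
    hmove]
  exact mul_mem (mul_mem hh hα) (star_mem_fgrp hh)

theorem localCopy_zero_x0 :
    localCopy S [0] (x0 S) = x0 S * x0 S * star (xgen S 1) * star (x0 S) := by
  refine hS.eq_of_forall_mul_sw_singleton fun i => hS.mul_sw_eq_of_forall_mul_sw_append fun j =>
    hS.mul_sw_eq_of_forall_mul_sw_append fun k => ?_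
  rw [xgen_eq_localCopy]
  fin_cases i <;> fin_cases j <;> fin_cases k <;>
    simp [sw_cons, mul_assoc, star_localCopy, localCopy_nil, hS.localCopy_cons_mul_self,
      hS.localCopy_cons_mul_of_ne, hS.x0_mul_S_zero, hS.x0_mul_S_one_S_zero,
      hS.x0_mul_S_one_S_one, hS.star_x0_mul_S_zero_S_zero, hS.star_x0_mul_S_zero_S_one,
      hS.star_x0_mul_S_one]

theorem localCopy_one_zero_x0 :
    localCopy S [1, 0] (x0 S)
      = xgen S 1 * xgen S 1 * star (x0 S) * star (xgen S 1) * x0 S * star (xgen S 1) := by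
  refine hS.eq_of_forall_mul_sw_singleton fun i => hS.mul_sw_eq_of_forall_mul_sw_append fun j =>
    hS.mul_sw_eq_of_forall_mul_sw_append fun k => hS.mul_sw_eq_of_forall_mul_sw_append fun l => ?_
  rw [xgen_eq_localCopy]
  fin_cases i <;> fin_cases j <;> fin_cases k <;> fin_cases l <;>
    simp [sw_cons, mul_assoc, star_localCopy, localCopy_nil, hS.localCopy_cons_mul_self,
      hS.localCopy_cons_mul_of_ne, hS.x0_mul_S_zero, hS.x0_mul_S_one_S_zero,
      hS.x0_mul_S_one_S_one, hS.star_x0_mul_S_zero_S_zero, hS.star_x0_mul_S_zero_S_one,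
      hS.star_x0_mul_S_one]

theorem localCopy_one_zero_x0_mem_fgrp :
    ∀ σ, localCopy S (1 :: 0 :: σ) (x0 S) ∈ Fgrp S
  | [] => by
    rw [hS.localCopy_one_zero_x0]
    have hx1 := xgen_mem_fgrp S 1
    have hx1' := star_mem_fgrp hx1
    exact mul_mem (mul_mem (mul_mem (mul_mem (mul_mem hx1 hx1) (star_mem_fgrp x0_mem_fgrp)) hx1')
      x0_mem_fgrp) hx1'
  | 0 :: τ => hS.localCopy_mem_fgrp_of_mul_sw (xgen_mem_fgrp S 1)
      (by simp [xgen_eq_localCopy, sw_cons, localCopy_nil, hS.localCopy_cons_mul_self,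
        hS.x0_mul_S_zero])
      (localCopy_one_zero_x0_mem_fgrp τ)
  | 1 :: τ => hS.localCopy_mem_fgrp_of_mul_sw (xgen_mem_fgrp S 1) (α := 1 :: 1 :: 0 :: τ)
      (by simp [xgen_eq_localCopy, sw_cons, localCopy_nil, hS.localCopy_cons_mul_self,
        hS.x0_mul_S_one_S_zero])
      (hS.localCopy_mem_fgrp_of_mul_sw (star_mem_fgrp x0_mem_fgrp)
        (by simp only [sw_cons, hS.star_x0_mul_S_one]) (localCopy_one_zero_x0_mem_fgrp τ))

theorem localCopy_x0_mem_fgrp : ∀ ν, localCopy S ν (x0 S) ∈ Fgrp S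
  | [] => by rw [localCopy_nil]; exact x0_mem_fgrp
  | [0] => by
    rw [hS.localCopy_zero_x0]
    exact mul_mem (mul_mem (mul_mem x0_mem_fgrp x0_mem_fgrp) (star_mem_fgrp (xgen_mem_fgrp S 1)))
      (star_mem_fgrp x0_mem_fgrp)
  | [1] => by rw [← List.replicate_one, ← xgen_eq_localCopy]; exact xgen_mem_fgrp S 1
  | 0 :: 0 :: ρ => hS.localCopy_mem_fgrp_of_mul_sw x0_mem_fgrp
      (by simp only [sw_cons, hS.x0_mul_S_zero]) (localCopy_x0_mem_fgrp (0 :: ρ))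
  | 0 :: 1 :: ρ => hS.localCopy_mem_fgrp_of_mul_sw x0_mem_fgrp
      (by simp only [sw_cons, hS.x0_mul_S_one_S_zero]) (hS.localCopy_one_zero_x0_mem_fgrp ρ)
  | 1 :: 0 :: ρ => hS.localCopy_one_zero_x0_mem_fgrp ρ
  | 1 :: 1 :: ρ => hS.localCopy_mem_fgrp_of_mul_sw (star_mem_fgrp x0_mem_fgrp)
      (by simp only [sw_cons, hS.star_x0_mul_S_one]) (localCopy_x0_mem_fgrp (1 :: ρ))

theorem mul_pw_eq_zero_of_mul_sw_mul_x0 {q : A} (hq : q ∈ Ddiag S) (hqp : IsStarProjection q)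
    {ν : List (Fin 2)} (h : q * Sw S ν * x0 S = q * Sw S ν) : q * Pw S ν = 0 := by
  have h' : q * Sw S ν * star (x0 S) = q * Sw S ν := by
    rw [← h, mul_assoc _ (x0 S), Unitary.mul_star_self_of_mem hS.x0_mem_unitary, mul_one, h]
  rw [← hS.sum_pw_append, Finset.mul_sum, Fin.sum_univ_two,
    hS.mul_pw_append_eq_zero hq hqp (by decide : (0 : Fin 2) ≠ 1) hS.x0_mul_S_zero h,
    hS.mul_pw_append_eq_zero hq hqp (by decide : (1 : Fin 2) ≠ 0) hS.star_x0_mul_S_one h',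
    add_zero]

end IsCuntz

end

theorem IsCuntz.le_one_sub_sum_pw {S : Fin 2 → A} (hS : IsCuntz S) {M : Finset (List (Fin 2))}
    (hM : ∀ μ ∈ M, ∀ ν ∈ M, μ ≠ ν → Pw S μ * Pw S ν = 0) {q : A} (hq : q ∈ Ddiag S)
    (hqp : IsStarProjection q) (h : ∀ ν ∈ M, q * Sw S ν * x0 S = q * Sw S ν) :
    q ≤ 1 - ∑ μ ∈ M, Pw S μ := by
  refine hqp.le_of_mul_eq_left (hS.isStarProjection_sum_pw hM).one_sub ?_
  rw [mul_sub, mul_one, Finset.mul_sum,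
    Finset.sum_eq_zero fun ν hν => hS.mul_pw_eq_zero_of_mul_sw_mul_x0 hq hqp (h ν hν), sub_zero]

theorem stmt_11_general {A : Type*} [CStarAlgebra A] [PartialOrder A] [StarOrderedRing A]
    (S : Fin 2 → A)
    (hiso : ∀ i, star (S i) * S i = 1)
    (hsum : S 0 * star (S 0) + S 1 * star (S 1) = 1)
    (p : A) (M : Finset (List (Fin 2)))
    (hM : ∀ μ ∈ M, ∀ ν ∈ M, μ ≠ ν → Pw S μ * Pw S ν = 0)
    (hpM : 1 - p = ∑ μ ∈ M, Pw S μ) :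
    ∃ w : A, w ∈ Fgrp S ∧ w ∈ unitary A ∧ IsOneW S w p := by
  have hS := IsCuntz.of_two hiso hsum
  obtain rfl : p = 1 - ∑ μ ∈ M, Pw S μ := by rw [← hpM, sub_sub_cancel]
  have hw : 1 + ∑ ν ∈ M, (localCopy S ν (x0 S) - 1) ∈ Fgrp S :=
    one_add_sum_mem_of_mul_eq_zero _ M
      (fun μ hμ ν hν hne => hS.localCopy_sub_one_mul_localCopy_sub_one (hM μ hμ ν hν hne) _)
      (fun ν _ => by rw [add_sub_cancel]; exact hS.localCopy_x0_mem_fgrp ν)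
  have hone : (1 : A) ∈ Ddiag S := by simpa [Pw, sw_nil] using pw_mem_ddiag S []
  refine ⟨_, hw, hS.mem_unitary_of_mem_fgrp hw,
    Submodule.sub_mem _ hone (Submodule.sum_mem _ fun μ _ => pw_mem_ddiag S μ),
    isProjection_iff.mpr (hS.isStarProjection_sum_pw hM).one_sub,
    hS.one_sub_sum_pw_mul_one_add_sum_localCopy hM _, fun q hq hqp hqw => ?_⟩
  refine hS.le_one_sub_sum_pw hM hq (isProjection_iff.mp hqp) fun ν hν => ?_
  rw [mul_assoc, ← hS.one_add_sum_localCopy_mul_sw hM _ hν, ← mul_assoc, hqw]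

theorem stmt_11 {A : Type*} [CStarAlgebra A] [PartialOrder A] [StarOrderedRing A]
    (S : Fin 2 → A)
    (hiso : ∀ i, star (S i) * S i = 1)
    (hsum : S 0 * star (S 0) + S 1 * star (S 1) = 1)
    (hgen : (StarAlgebra.adjoin ℂ (Set.range S)).topologicalClosure = ⊤)
    (p : A) (L M : Finset (List (Fin 2)))
    (hL : ∀ μ ∈ L, ∀ ν ∈ L, μ ≠ ν → Pw S μ * Pw S ν = 0)
    (hpL : p = ∑ μ ∈ L, Pw S μ)
    (hM : ∀ μ ∈ M, ∀ ν ∈ M, μ ≠ ν → Pw S μ * Pw S ν = 0)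
    (hpM : 1 - p = ∑ μ ∈ M, Pw S μ) :
    ∃ w : A, w ∈ Fgrp S ∧ w ∈ unitary A ∧ IsOneW S w p :=
  stmt_11_general S hiso hsum p M hM hpM
end

section
/- Let u be a unitary in O_2 and let α : O_2 → O_2 be a unital *-homomorphism with α(S_1) = uS_1 and α(S_2) = uS_2, such that α(T) ⊆ V. Then u ∈ V if and only if α(D_2) ⊆ D_2. -/
open scoped BigOperators

variable {A : Type*} [CStarAlgebra A] [PartialOrder A] [StarOrderedRing A]

/-!
An isometry `v ∈ 𝒱_n` maps cylinders to cylinders: for a word `μ` longer than the words in `v`,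
`v S_μ` is a sum of words which is an isometry, and compressing by a test word `S_{0^L 1}` shows it
is a single word `S_w`, so `v P_μ v* = P_w`. Since `α(P_{iμ}) = (uS_i) α(P_μ) (uS_i)*`, if
`u ∈ V` then `α` preserves the span of the `P_μ`, hence `D_2`.

Conversely, if `α(D_2) ⊆ D_2` then each `α(P_μ)` is a projection of `D_2`, and a norm
approximation shows that such a projection is a finite sum of `P_l`'s, so lies in `𝒱_2`. The
identities `S_iS_j = g_{ij}S_j` with `g_{ij} ∈ T` give `α(S_i) = ∑_j α(g_{ij}) α(P_j) ∈ 𝒱_2`, and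
`u = ∑_i α(S_i) S_i*`.
-/

lemma List.eq_of_append_prefix_append_replicate_append {α : Type*} {a b : α} (hab : a ≠ b)
    {L : ℕ} {s t : List α} (ht : t.length ≤ L)
    (h : s ++ (List.replicate L a ++ [b]) <+: t ++ (List.replicate L a ++ [b])) : s = t := by
  have hlen : s.length ≤ t.length := by simpa using h.length_le
  rcases hlen.lt_or_eq with hlt | heq
  · -- the letter `b` of the left word sits at a position where the right word has an `a`
    have h₁ : ¬ s.length + L < t.length := by omega
    have h₂ : s.length + L - t.length < L := by omega
    have hb : (s ++ (List.replicate L a ++ [b]))[s.length + L]'(by simp) = b := by simp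
    have ha : (t ++ (List.replicate L a ++ [b]))[s.length + L]'(by simp; omega) = a := by
      simp [List.getElem_append, h₁, h₂]
    exact absurd (ha.symm.trans ((h.getElem _).symm.trans hb)) hab
  · exact List.append_cancel_right (h.eq_of_length (by simp [heq]))

lemma IsIdempotentElem.eq_zero_or_eq_of_norm_smul_sub_lt {E : Type*} [NormedRing E]
    [NormedAlgebra ℂ E] {e q : E} (he : IsIdempotentElem e) (hq : IsIdempotentElem q)
    (heq : e * q = q) (hqe : q * e = q) {c : ℂ} (h : ‖c • e - q‖ < 1 / 2) :
    q = 0 ∨ q = e := by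
  by_contra! hne
  have bound : ∀ (x : E) (d : ℂ), x ≠ 0 → (c • e - q) * x = d • x → ‖d‖ < 1 / 2 := by
    intro x d hx hd
    have hx' : 0 < ‖x‖ := norm_pos_iff.mpr hx
    have : ‖d‖ * ‖x‖ ≤ ‖c • e - q‖ * ‖x‖ := by
      rw [← norm_smul, ← hd]; exact norm_mul_le _ _
    nlinarith
  -- `c • e - q` acts as `c - 1` on `q` and as `c` on `e - q`
  have h₁ := bound q (c - 1) hne.1 (by
    rw [sub_mul, smul_mul_assoc, heq, hq.eq, sub_smul, one_smul])
  have h₂ := bound (e - q) c (sub_ne_zero.mpr hne.2.symm) (by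
    rw [sub_mul, mul_sub, mul_sub, smul_mul_assoc, smul_mul_assoc, he.eq, heq, hqe, hq.eq,
      smul_sub]; abel)
  have : (1 : ℝ) ≤ ‖c‖ + ‖c - 1‖ := by
    simpa using norm_sub_le c (c - 1)
  linarith

section

variable {A : Type*} [CStarAlgebra A]

section Words

variable {n : ℕ} {S : Fin n → A}

@[simp] lemma Sw_nil : Sw S [] = 1 := rfl

@[simp] lemma Sw_cons (i : Fin n) (μ : List (Fin n)) : Sw S (i :: μ) = S i * Sw S μ :=
  List.prod_cons

lemma Sw_append (μ ν : List (Fin n)) : Sw S (μ ++ ν) = Sw S μ * Sw S ν := by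
  simp [Sw]

lemma Pw_cons (i : Fin n) (μ : List (Fin n)) : Pw S (i :: μ) = S i * Pw S μ * star (S i) := by
  simp [Pw, star_mul, mul_assoc]

lemma zero_mem_Vset : (0 : A) ∈ Vset S := ⟨∅, by simp⟩

lemma Sw_mul_star_mem_Vset (μ ν : List (Fin n)) : Sw S μ * star (Sw S ν) ∈ Vset S :=
  ⟨{(μ, ν)}, by simp⟩

lemma S_mem_Vset (i : Fin n) : S i ∈ Vset S := by
  simpa using Sw_mul_star_mem_Vset (S := S) [i] []

lemma star_S_mem_Vset (i : Fin n) : star (S i) ∈ Vset S := by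
  simpa using Sw_mul_star_mem_Vset (S := S) [] [i]

lemma Pw_mem_Ddiag (μ : List (Fin n)) : Pw S μ ∈ Ddiag S :=
  Submodule.le_topologicalClosure _ (Submodule.subset_span ⟨μ, rfl⟩)

end Words

def wordsOfLength (n : ℕ) : ℕ → Finset (List (Fin n))
  | 0 => {[]}
  | k + 1 => (Finset.univ ×ˢ wordsOfLength n k).image fun p => p.1 :: p.2

lemma mem_wordsOfLength {n k : ℕ} {l : List (Fin n)} : l ∈ wordsOfLength n k ↔ l.length = k := by
  induction k generalizing l with
  | zero => simp [wordsOfLength]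
  | succ k ih => cases l <;> simp [wordsOfLength, ih]

structure IsCuntzFamily {n : ℕ} (S : Fin n → A) : Prop where
  star_mul_self : ∀ i, star (S i) * S i = 1
  sum_mul_star : ∑ i, S i * star (S i) = 1

namespace IsCuntzFamily

variable {n : ℕ} {S : Fin n → A} (hS : IsCuntzFamily S)
include hS

lemma star_mul_of_ne {i j : Fin n} (hij : i ≠ j) : star (S i) * S j = 0 := by
  -- `1 = S_j* (∑ₖ Pₖ) S_j = ∑ₖ |S_k* S_j|²` and the `k = j` term is already `1`
  classical
  let _ := CStarAlgebra.spectralOrder A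
  let _ := CStarAlgebra.spectralOrderedRing A
  set x : Fin n → A := fun k => star (S k) * S j
  have hsum : ∑ k, star (x k) * x k = 1 := by
    calc ∑ k, star (x k) * x k = star (S j) * (∑ k, S k * star (S k)) * S j := by
          simp [x, Finset.mul_sum, Finset.sum_mul, star_mul, mul_assoc]
      _ = 1 := by rw [hS.sum_mul_star, mul_one, hS.star_mul_self]
  have hj : star (x j) * x j = 1 := by simp [x, hS.star_mul_self]
  rw [← Finset.add_sum_erase _ _ (Finset.mem_univ j), hj] at hsum
  have hrest : ∑ k ∈ Finset.univ.erase j, star (x k) * x k = 0 := add_eq_left.mp hsum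
  have hi := (Finset.sum_eq_zero_iff_of_nonneg fun k _ => star_mul_self_nonneg (x k)).mp hrest i
    (Finset.mem_erase.mpr ⟨hij, Finset.mem_univ i⟩)
  exact (CStarRing.star_mul_self_eq_zero_iff _).mp hi

lemma star_mul_self_mul (i : Fin n) (x : A) : star (S i) * (S i * x) = x := by
  rw [← mul_assoc, hS.star_mul_self, one_mul]

lemma star_mul_mul_of_ne {i j : Fin n} (hij : i ≠ j) (x : A) : star (S i) * (S j * x) = 0 := by
  rw [← mul_assoc, hS.star_mul_of_ne hij, zero_mul]

lemma star_Sw_mul_Sw (μ : List (Fin n)) : star (Sw S μ) * Sw S μ = 1 := by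
  induction μ with
  | nil => simp
  | cons i μ ih => rw [Sw_cons, star_mul, mul_assoc, hS.star_mul_self_mul, ih]

lemma star_Sw_mul_Sw_append (μ ν : List (Fin n)) : star (Sw S μ) * Sw S (μ ++ ν) = Sw S ν := by
  rw [Sw_append, ← mul_assoc, hS.star_Sw_mul_Sw, one_mul]

lemma star_Sw_append_mul_Sw (μ ν : List (Fin n)) :
    star (Sw S (μ ++ ν)) * Sw S μ = star (Sw S ν) := by
  simpa [star_mul] using congrArg star (hS.star_Sw_mul_Sw_append μ ν)

lemma star_Sw_mul_Sw_eq_zero {μ ν : List (Fin n)} (h₁ : ¬ μ <+: ν) (h₂ : ¬ ν <+: μ) :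
    star (Sw S μ) * Sw S ν = 0 := by
  induction μ generalizing ν with
  | nil => exact absurd List.nil_prefix h₁
  | cons i μ ih =>
    cases ν with
    | nil => exact absurd List.nil_prefix h₂
    | cons j ν =>
      rw [Sw_cons, Sw_cons, star_mul, mul_assoc]
      by_cases hij : i = j
      · subst hij
        rw [hS.star_mul_self_mul, ih (by simpa using h₁) (by simpa using h₂)]
      · rw [hS.star_mul_mul_of_ne hij, mul_zero]

lemma Pw_mul_Pw_append (μ ν : List (Fin n)) : Pw S μ * Pw S (μ ++ ν) = Pw S (μ ++ ν) := by
  rw [Pw, Pw, mul_assoc, ← mul_assoc (star _), hS.star_Sw_mul_Sw_append, ← mul_assoc,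
    ← Sw_append]

lemma Pw_append_mul_Pw (μ ν : List (Fin n)) : Pw S (μ ++ ν) * Pw S μ = Pw S (μ ++ ν) := by
  rw [Pw, Pw, mul_assoc, ← mul_assoc (star _), hS.star_Sw_append_mul_Sw, ← star_mul,
    ← Sw_append]

lemma Pw_mul_Pw_eq_zero {μ ν : List (Fin n)} (h₁ : ¬ μ <+: ν) (h₂ : ¬ ν <+: μ) :
    Pw S μ * Pw S ν = 0 := by
  rw [Pw, Pw, mul_assoc, ← mul_assoc (star _), hS.star_Sw_mul_Sw_eq_zero h₁ h₂, zero_mul,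
    mul_zero]

lemma commute_Pw (μ ν : List (Fin n)) : Commute (Pw S μ) (Pw S ν) := by
  by_cases h₁ : μ <+: ν
  · obtain ⟨d, rfl⟩ := h₁
    exact (hS.Pw_mul_Pw_append μ d).trans (hS.Pw_append_mul_Pw μ d).symm
  by_cases h₂ : ν <+: μ
  · obtain ⟨d, rfl⟩ := h₂
    exact (hS.Pw_append_mul_Pw ν d).trans (hS.Pw_mul_Pw_append ν d).symm
  exact (hS.Pw_mul_Pw_eq_zero h₁ h₂).trans (hS.Pw_mul_Pw_eq_zero h₂ h₁).symm

lemma isStarProjection_Pw (μ : List (Fin n)) : IsStarProjection (Pw S μ) where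
  isIdempotentElem := (by simpa using hS.Pw_mul_Pw_append μ [] : Pw S μ * Pw S μ = Pw S μ)
  isSelfAdjoint := by simp [IsSelfAdjoint, Pw, star_mul]

lemma sum_Pw_wordsOfLength (k : ℕ) : ∑ l ∈ wordsOfLength n k, Pw S l = 1 := by
  induction k with
  | zero => simp [wordsOfLength, Pw]
  | succ k ih =>
    rw [wordsOfLength, Finset.sum_image fun p _ q _ h => by simpa [Prod.ext_iff] using h,
      Finset.sum_product]
    simp_rw [Pw_cons, ← Finset.sum_mul, ← Finset.mul_sum, ih, mul_one, hS.sum_mul_star]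

lemma Sw_mul_star_eq_sum (a b : List (Fin n)) (k : ℕ) :
    Sw S a * star (Sw S b) =
      ∑ l ∈ wordsOfLength n k, Sw S (a ++ l) * star (Sw S (b ++ l)) := by
  calc Sw S a * star (Sw S b) = Sw S a * (∑ l ∈ wordsOfLength n k, Pw S l) * star (Sw S b) := by
        rw [hS.sum_Pw_wordsOfLength, mul_one]
    _ = _ := by simp_rw [Finset.mul_sum, Finset.sum_mul, Pw, Sw_append, star_mul, mul_assoc]


lemma add_Sw_mul_star_mem_Vset {x : A} (hx : x ∈ Vset S) (a b : List (Fin n)) :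
    x + Sw S a * star (Sw S b) ∈ Vset S := by
  classical
  obtain ⟨J, rfl⟩ := hx
  -- refine the new term to words longer than every word occurring in `J`, so no pair repeats
  set k := (J.sup fun p => p.1.length) + 1
  have hinj : Function.Injective fun l : List (Fin n) => (a ++ l, b ++ l) :=
    fun l m h => List.append_cancel_left (congrArg Prod.fst h)
  have hdisj : Disjoint J ((wordsOfLength n k).image fun l => (a ++ l, b ++ l)) := by
    refine Finset.disjoint_right.mpr fun p hp hpJ => ?_
    obtain ⟨l, hl, rfl⟩ := Finset.mem_image.mp hp
    have hle := Finset.le_sup (f := fun p : List (Fin n) × List (Fin n) => p.1.length) hpJ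
    simp only [List.length_append, mem_wordsOfLength.mp hl, k] at hle
    omega
  refine ⟨J ∪ (wordsOfLength n k).image fun l => (a ++ l, b ++ l), ?_⟩
  rw [Finset.sum_union hdisj, Finset.sum_image fun l _ m _ h => hinj h,
    hS.Sw_mul_star_eq_sum a b k]

lemma add_mem_Vset {x y : A} (hx : x ∈ Vset S) (hy : y ∈ Vset S) : x + y ∈ Vset S := by
  classical
  obtain ⟨K, rfl⟩ := hy
  induction K using Finset.induction with
  | empty => simpa using hx
  | insert q K hq ih =>
    rw [Finset.sum_insert hq, add_comm (Sw S q.1 * _), ← add_assoc]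
    exact hS.add_Sw_mul_star_mem_Vset ih q.1 q.2

lemma Sw_mul_star_mul_Sw_mul_star_mem_Vset (a b c d : List (Fin n)) :
    Sw S a * star (Sw S b) * (Sw S c * star (Sw S d)) ∈ Vset S := by
  by_cases h₁ : b <+: c
  · obtain ⟨e, rfl⟩ := h₁
    rw [mul_assoc, ← mul_assoc (star _), hS.star_Sw_mul_Sw_append, ← mul_assoc, ← Sw_append]
    exact Sw_mul_star_mem_Vset _ _
  by_cases h₂ : c <+: b
  · obtain ⟨e, rfl⟩ := h₂
    rw [mul_assoc, ← mul_assoc (star _), hS.star_Sw_append_mul_Sw, ← star_mul, ← Sw_append]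
    exact Sw_mul_star_mem_Vset _ _
  rw [mul_assoc, ← mul_assoc (star _), hS.star_Sw_mul_Sw_eq_zero h₁ h₂, zero_mul, mul_zero]
  exact zero_mem_Vset

lemma mul_mem_Vset {x y : A} (hx : x ∈ Vset S) (hy : y ∈ Vset S) : x * y ∈ Vset S := by
  obtain ⟨J, rfl⟩ := hx
  obtain ⟨K, rfl⟩ := hy
  rw [Finset.sum_mul_sum]
  exact Finset.sum_induction _ (· ∈ Vset S) (fun _ _ => hS.add_mem_Vset) zero_mem_Vset
    fun p _ => Finset.sum_induction _ (· ∈ Vset S) (fun _ _ => hS.add_mem_Vset) zero_mem_Vset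
      fun q _ => hS.Sw_mul_star_mul_Sw_mul_star_mem_Vset _ _ _ _

def vsetSubsemiring : Subsemiring A where
  carrier := Vset S
  zero_mem' := zero_mem_Vset
  one_mem' := by simpa using Sw_mul_star_mem_Vset (S := S) [] []
  add_mem' := hS.add_mem_Vset
  mul_mem' := hS.mul_mem_Vset


lemma commute_of_mem_Ddiag {x : A} (hx : x ∈ Ddiag S) (μ : List (Fin n)) :
    Commute x (Pw S μ) := by
  have hle : Submodule.span ℂ (Set.range (Pw S)) ≤
      Subalgebra.toSubmodule (Subalgebra.centralizer ℂ (Set.range (Pw S))) :=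
    Submodule.span_le.mpr <| by
      rintro _ ⟨ν, rfl⟩ _ ⟨μ, rfl⟩
      exact hS.commute_Pw μ ν
  exact (Submodule.topologicalClosure_minimal _ hle (Set.isClosed_centralizer _) hx
    (Pw S μ) ⟨μ, rfl⟩).symm

lemma exists_Pw_mul_mul_Pw_eq_smul {y : A} (hy : y ∈ Submodule.span ℂ (Set.range (Pw S))) :
    ∃ k, ∀ l : List (Fin n), k ≤ l.length → ∃ c : ℂ, Pw S l * y * Pw S l = c • Pw S l := by
  induction hy using Submodule.span_induction with
  | mem y hy =>
    obtain ⟨μ, rfl⟩ := hy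
    refine ⟨μ.length, fun l hl => ?_⟩
    by_cases h : μ <+: l
    · obtain ⟨d, rfl⟩ := h
      exact ⟨1, by rw [hS.Pw_append_mul_Pw, (hS.isStarProjection_Pw _).isIdempotentElem.eq,
        one_smul]⟩
    · have h' : ¬ l <+: μ :=
        fun h' => h (List.prefix_of_prefix_length_le (List.prefix_refl μ) h' hl)
      exact ⟨0, by rw [hS.Pw_mul_Pw_eq_zero h' h, zero_mul, zero_smul]⟩
  | zero => exact ⟨0, fun l _ => ⟨0, by simp⟩⟩
  | add y z _ _ hy hz =>
    obtain ⟨k₁, hk₁⟩ := hy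
    obtain ⟨k₂, hk₂⟩ := hz
    refine ⟨max k₁ k₂, fun l hl => ?_⟩
    obtain ⟨c₁, hc₁⟩ := hk₁ l (le_of_max_le_left hl)
    obtain ⟨c₂, hc₂⟩ := hk₂ l (le_of_max_le_right hl)
    exact ⟨c₁ + c₂, by rw [mul_add, add_mul, hc₁, hc₂, add_smul]⟩
  | smul a y _ hy =>
    obtain ⟨k, hk⟩ := hy
    refine ⟨k, fun l hl => ?_⟩
    obtain ⟨c, hc⟩ := hk l hl
    exact ⟨a * c, by rw [mul_smul_comm, smul_mul_assoc, hc, smul_smul]⟩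

/-- Approximate `p` within `1/2` by `y` in the span: for every long word `l`, `p P_l` is a
projection below `P_l` within `1/2` of the multiple `P_l y P_l` of `P_l`, hence `0` or `P_l`. -/
lemma exists_eq_sum_Pw_of_mem_Ddiag {p : A} (hp : p ∈ Ddiag S) (hpp : IsStarProjection p) :
    ∃ I : Finset (List (Fin n)), p = ∑ l ∈ I, Pw S l := by
  classical
  rw [Ddiag, Submodule.topologicalClosure_coe] at hp
  obtain ⟨y, hy, hpy⟩ := Metric.mem_closure_iff.mp hp (1 / 2) (by norm_num)
  obtain ⟨k, hk⟩ := hS.exists_Pw_mul_mul_Pw_eq_smul hy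
  have hdich : ∀ l ∈ wordsOfLength n k, p * Pw S l = 0 ∨ p * Pw S l = Pw S l := by
    intro l hl
    obtain ⟨c, hc⟩ := hk l (mem_wordsOfLength.mp hl).ge
    have he := hS.isStarProjection_Pw l
    have hcomm := hS.commute_of_mem_Ddiag hp l
    refine he.isIdempotentElem.eq_zero_or_eq_of_norm_smul_sub_lt
      (hpp.mul he hcomm).isIdempotentElem ?_ (by rw [mul_assoc, he.isIdempotentElem.eq]) (c := c) ?_
    · rw [← mul_assoc, ← hcomm.eq, mul_assoc, he.isIdempotentElem.eq]
    · have : c • Pw S l - p * Pw S l = Pw S l * (y - p) * Pw S l := by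
        rw [mul_sub, sub_mul, hc, ← hcomm.eq, mul_assoc, he.isIdempotentElem.eq]
      calc ‖c • Pw S l - p * Pw S l‖ ≤ ‖Pw S l‖ * ‖y - p‖ * ‖Pw S l‖ := by
            rw [this]; exact norm_mul₃_le
        _ ≤ 1 * ‖y - p‖ * 1 := by gcongr <;> exact he.norm_le
        _ < 1 / 2 := by rw [norm_sub_rev, ← dist_eq_norm]; simpa using hpy
  refine ⟨(wordsOfLength n k).filter fun l => p * Pw S l = Pw S l, ?_⟩
  calc p = ∑ l ∈ wordsOfLength n k, p * Pw S l := by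
        rw [← Finset.mul_sum, hS.sum_Pw_wordsOfLength, mul_one]
    _ = ∑ l ∈ wordsOfLength n k, if p * Pw S l = Pw S l then Pw S l else 0 :=
        Finset.sum_congr rfl fun l hl => by
          rcases hdich l hl with h | h <;> simp [h]
    _ = _ := (Finset.sum_filter _ _).symm


lemma star_Sw_append_mul_Sw_append_replicate {a b : Fin n} (hab : a ≠ b) {L : ℕ}
    {s t : List (Fin n)} (hs : s.length ≤ L) (ht : t.length ≤ L) :
    star (Sw S (s ++ (List.replicate L a ++ [b]))) * Sw S (t ++ (List.replicate L a ++ [b])) =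
      if s = t then 1 else 0 := by
  split_ifs with hst
  · rw [hst, hS.star_Sw_mul_Sw]
  · exact hS.star_Sw_mul_Sw_eq_zero
      (fun h => hst (List.eq_of_append_prefix_append_replicate_append hab ht h))
      (fun h => hst (List.eq_of_append_prefix_append_replicate_append hab hs h).symm)

/-- Compressing `T*T = 1` by `S_{0^L 1}`, with `L` beyond all word lengths, counts the pairs of
equal words in the sum `T`. -/
lemma exists_eq_Sw_of_star_mul_self_eq_one [Nontrivial A] (hn : 1 < n) {ι : Type*}
    (J : Finset ι) (w : ι → List (Fin n))
    (h : star (∑ p ∈ J, Sw S (w p)) * ∑ p ∈ J, Sw S (w p) = 1) :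
    ∃ v, ∑ p ∈ J, Sw S (w p) = Sw S v := by
  classical
  set L := J.sup fun p => (w p).length
  set m : List (Fin n) := List.replicate L ⟨0, by omega⟩ ++ [⟨1, hn⟩]
  have hL : ∀ p ∈ J, (w p).length ≤ L := fun p hp => Finset.le_sup (f := fun p => (w p).length) hp
  have hcount : ((J ×ˢ J).filter fun pq => w pq.1 = w pq.2).card = 1 := by
    have hcast : ((1 : ℕ) : A) = (((J ×ˢ J).filter fun pq => w pq.1 = w pq.2).card : A) :=
      calc ((1 : ℕ) : A) = star (Sw S m) * (star (∑ p ∈ J, Sw S (w p)) *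
              ∑ p ∈ J, Sw S (w p)) * Sw S m := by
            rw [h, mul_one, hS.star_Sw_mul_Sw, Nat.cast_one]
        _ = ∑ pq ∈ J ×ˢ J, star (Sw S (w pq.1 ++ m)) * Sw S (w pq.2 ++ m) := by
            simp_rw [star_sum, Finset.sum_mul_sum, Finset.sum_product, Finset.mul_sum,
              Finset.sum_mul, Sw_append, star_mul, mul_assoc]
        _ = ∑ pq ∈ J ×ˢ J, if w pq.1 = w pq.2 then 1 else 0 := by
            refine Finset.sum_congr rfl fun pq hpq => ?_
            rw [Finset.mem_product] at hpq
            exact hS.star_Sw_append_mul_Sw_append_replicate (by simp [Fin.ext_iff])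
              (hL _ hpq.1) (hL _ hpq.2)
        _ = _ := Finset.sum_boole _ _
    have := charZero_of_injective_algebraMap (R := ℂ) (A := A) (algebraMap ℂ A).injective
    exact_mod_cast hcast.symm
  have hJ : J.card ≤ 1 := hcount ▸ Finset.card_le_card_of_injOn (fun p => (p, p))
    (fun p hp => by simpa using hp) (fun p _ q _ h => congrArg Prod.fst h)
  rcases J.eq_empty_or_nonempty with rfl | hne
  · simp at h
  · obtain ⟨p, rfl⟩ := Finset.card_eq_one.mp (le_antisymm hJ hne.card_pos)
    exact ⟨w p, Finset.sum_singleton _ _⟩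

lemma sum_Sw_mul_star_mul_Sw (J : Finset (List (Fin n) × List (Fin n))) {μ : List (Fin n)}
    (hμ : ∀ p ∈ J, p.2.length ≤ μ.length) :
    (∑ p ∈ J, Sw S p.1 * star (Sw S p.2)) * Sw S μ =
      ∑ p ∈ J.filter (·.2 <+: μ), Sw S (p.1 ++ μ.drop p.2.length) := by
  classical
  rw [Finset.sum_mul, Finset.sum_filter]
  refine Finset.sum_congr rfl fun p hp => ?_
  split_ifs with h
  · conv_lhs => rw [← List.prefix_iff_eq_append.mp h]
    rw [mul_assoc, hS.star_Sw_mul_Sw_append, Sw_append]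
  · have h' : ¬ μ <+: p.2 :=
      fun h' => h (List.prefix_of_prefix_length_le (List.prefix_refl _) h' (hμ p hp))
    rw [mul_assoc, hS.star_Sw_mul_Sw_eq_zero h h', mul_zero]

/-- After refining `P_ν` to long words `νl`, `v S_{νl}` is a sum of words and an isometry,
hence a single word `S_w`, so `v P_{νl} v* = P_w`. -/
lemma conj_Pw_mem_span (hn : 1 < n) {v : A} (hv : v ∈ Vset S) (hvv : star v * v = 1)
    (ν : List (Fin n)) : v * Pw S ν * star v ∈ Submodule.span ℂ (Set.range (Pw S)) := by
  classical
  rcases subsingleton_or_nontrivial A with hA | hA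
  · rw [Subsingleton.elim (v * Pw S ν * star v) 0]
    exact zero_mem _
  obtain ⟨J, hJ⟩ := hv
  rw [Pw, hS.Sw_mul_star_eq_sum ν ν (J.sup fun p => p.2.length), Finset.mul_sum, Finset.sum_mul]
  refine Submodule.sum_mem _ fun l hl => ?_
  have hvS := hS.sum_Sw_mul_star_mul_Sw J (μ := ν ++ l) fun p hp => by
    have := Finset.le_sup (f := fun p : List (Fin n) × List (Fin n) => p.2.length) hp
    simp only [List.length_append, mem_wordsOfLength.mp hl] at this ⊢
    omega
  rw [← hJ] at hvS
  have hiso : star (v * Sw S (ν ++ l)) * (v * Sw S (ν ++ l)) = 1 := by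
    rw [star_mul, mul_assoc, ← mul_assoc (star v), hvv, one_mul, hS.star_Sw_mul_Sw]
  rw [hvS] at hiso
  obtain ⟨w, hw⟩ := hS.exists_eq_Sw_of_star_mul_self_eq_one hn _ _ hiso
  have : v * (Sw S (ν ++ l) * star (Sw S (ν ++ l))) * star v = Pw S w := by
    rw [Pw, ← hw, ← hvS, star_mul]
    simp only [mul_assoc]
  rw [this]
  exact Submodule.subset_span ⟨w, rfl⟩

lemma conj_mem_span (hn : 1 < n) {v : A} (hv : v ∈ Vset S) (hvv : star v * v = 1) {x : A}
    (hx : x ∈ Submodule.span ℂ (Set.range (Pw S))) :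
    v * x * star v ∈ Submodule.span ℂ (Set.range (Pw S)) := by
  induction hx using Submodule.span_induction with
  | mem x hx =>
    obtain ⟨ν, rfl⟩ := hx
    exact hS.conj_Pw_mem_span hn hv hvv ν
  | zero => simp
  | add x y _ _ hx hy => simpa [mul_add, add_mul] using add_mem hx hy
  | smul c x _ hx => simpa using Submodule.smul_mem _ c hx

open scoped CStarAlgebra in
theorem map_mem_Ddiag (hn : 1 < n) (α : A →⋆ₐ[ℂ] A) (hα : ∀ i, α (S i) ∈ Vset S) {x : A}
    (hx : x ∈ Ddiag S) : α x ∈ Ddiag S := by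
  have hP : ∀ μ, α (Pw S μ) ∈ Submodule.span ℂ (Set.range (Pw S)) := by
    intro μ
    induction μ with
    | nil =>
      have h₁ : Pw S ([] : List (Fin n)) = 1 := by simp [Pw]
      rw [h₁, map_one, ← h₁]
      exact Submodule.subset_span ⟨[], rfl⟩
    | cons i μ ih =>
      rw [Pw_cons, map_mul, map_mul, map_star]
      refine hS.conj_mem_span hn (hα i) ?_ ih
      rw [← map_star, ← map_mul, hS.star_mul_self, map_one]
  have hspan : Submodule.span ℂ (Set.range (Pw S)) ≤
      (Submodule.span ℂ (Set.range (Pw S))).comap α.toAlgHom.toLinearMap :=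
    Submodule.span_le.mpr (Set.range_subset_iff.mpr hP)
  rw [Ddiag, Submodule.topologicalClosure_coe] at hx ⊢
  exact map_mem_closure (map_continuous α) hx fun y hy => hspan hy

end IsCuntzFamily

namespace IsCuntzFamily

variable {S : Fin 2 → A} (hS : IsCuntzFamily S)
include hS

lemma exists_mem_Tgrp_mul_S (i j : Fin 2) : ∃ g ∈ Tgrp S, S i * S j = g * S j := by
  have hx₀ : x0 S ∈ Tgrp S := Submonoid.subset_closure (Or.inl (Or.inl ⟨0, rfl⟩))
  have ht : tgen S ∈ Tgrp S := Submonoid.subset_closure (Or.inl (Or.inr rfl))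
  have hx₀' : star (x0 S) ∈ Tgrp S :=
    Submonoid.subset_closure (Or.inr ⟨x0 S, Or.inl ⟨0, rfl⟩, rfl⟩)
  have ht' : star (tgen S) ∈ Tgrp S :=
    Submonoid.subset_closure (Or.inr ⟨tgen S, Or.inr rfl, rfl⟩)
  have h01 : (0 : Fin 2) ≠ 1 := by decide
  have s01 := hS.star_mul_of_ne h01
  have s10 := hS.star_mul_of_ne h01.symm
  have m01 := hS.star_mul_mul_of_ne h01
  have m10 := hS.star_mul_mul_of_ne h01.symm
  fin_cases i <;> fin_cases j
  · refine ⟨x0 S, hx₀, ?_⟩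
    simp [x0, add_mul, mul_assoc, hS.star_mul_self, s10]
  · refine ⟨x0 S * tgen S * star (x0 S), mul_mem (mul_mem hx₀ ht) hx₀', ?_⟩
    simp [x0, tgen, star_add, star_mul, add_mul, mul_add, mul_assoc, hS.star_mul_self,
      hS.star_mul_self_mul, s01, m01, m10]
  · refine ⟨star (tgen S), ht', ?_⟩
    simp [tgen, star_add, star_mul, add_mul, mul_assoc, hS.star_mul_self, s10]
  · refine ⟨star (x0 S), hx₀', ?_⟩
    simp [x0, star_add, star_mul, add_mul, mul_assoc, hS.star_mul_self, s01]

lemma S_mem_closure (i : Fin 2) : S i ∈ Subsemiring.closure (Tgrp S ∪ Set.range (Pw S)) := by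
  choose g hg hgS using hS.exists_mem_Tgrp_mul_S i
  have : S i = ∑ j, g j * Pw S [j] := by
    calc S i = ∑ j, S i * S j * star (S j) := by
          simp_rw [mul_assoc, ← Finset.mul_sum, hS.sum_mul_star, mul_one]
      _ = _ := by simp [hgS, Pw, mul_assoc]
  rw [this]
  exact sum_mem fun j _ => mul_mem (Subsemiring.subset_closure (Or.inl (hg j)))
    (Subsemiring.subset_closure (Or.inr ⟨[j], rfl⟩))

end IsCuntzFamily

end

theorem stmt_18_general {A : Type*} [CStarAlgebra A] [PartialOrder A] [StarOrderedRing A]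
    (S : Fin 2 → A)
    (hiso : ∀ i, star (S i) * S i = 1)
    (hsum : S 0 * star (S 0) + S 1 * star (S 1) = 1)
    (u : A) (hu : u ∈ unitary A)
    (α : A →⋆ₐ[ℂ] A) (hα : ∀ i, α (S i) = u * S i)
    (hT : ∀ w ∈ Tgrp S, α w ∈ Vgrp S) :
    u ∈ Vgrp S ↔ ∀ x ∈ Ddiag S, α x ∈ Ddiag S := by
  have hS : IsCuntzFamily S := ⟨hiso, by rwa [Fin.sum_univ_two]⟩
  constructor
  · rintro ⟨huV, -⟩ x hx
    refine hS.map_mem_Ddiag one_lt_two α (fun i => ?_) hx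
    rw [hα i]
    exact hS.mul_mem_Vset huV (S_mem_Vset i)
  · intro hD
    have hαP : ∀ μ, α (Pw S μ) ∈ hS.vsetSubsemiring := fun μ => by
      obtain ⟨I, hI⟩ := hS.exists_eq_sum_Pw_of_mem_Ddiag (hD _ (Pw_mem_Ddiag μ))
        ((hS.isStarProjection_Pw μ).map α)
      exact hI ▸ sum_mem fun l _ => Sw_mul_star_mem_Vset l l
    have hαS : ∀ i, α (S i) ∈ hS.vsetSubsemiring := fun i =>
      (Subsemiring.closure_le (t := hS.vsetSubsemiring.comap (α : A →+* A))).mpr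
        (Set.union_subset (fun w hw => (hT w hw).1) (Set.range_subset_iff.mpr hαP))
        (hS.S_mem_closure i)
    have hu_eq : u = ∑ i, α (S i) * star (S i) := by
      simp_rw [hα, mul_assoc, ← Finset.mul_sum, hS.sum_mul_star, mul_one]
    exact ⟨hu_eq ▸ sum_mem fun i _ => mul_mem (hαS i) (star_S_mem_Vset i), hu⟩

theorem stmt_18 {A : Type*} [CStarAlgebra A] [PartialOrder A] [StarOrderedRing A]
    (S : Fin 2 → A)
    (hiso : ∀ i, star (S i) * S i = 1)
    (hsum : S 0 * star (S 0) + S 1 * star (S 1) = 1)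
    (hgen : (StarAlgebra.adjoin ℂ (Set.range S)).topologicalClosure = ⊤)
    (u : A) (hu : u ∈ unitary A)
    (α : A →⋆ₐ[ℂ] A) (hα : ∀ i, α (S i) = u * S i)
    (hT : ∀ w ∈ Tgrp S, α w ∈ Vgrp S) :
    u ∈ Vgrp S ↔ ∀ x ∈ Ddiag S, α x ∈ Ddiag S :=
  stmt_18_general S hiso hsum u hu α hα hT
end
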